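/- Let q be a probability measure on X × {1,…,n}, let h : X → Δⁿ be a measurable classifier, and let C ⊆ {1,…,n} be such that y ∈ C for q-almost every (x, y). With ẇ = E_{(x,y)∼q} e_y, w = E_{(x,y)∼q} h(x), δ̄ = E_{(x,y)∼q} (1 − maxⱼ h(x)ⱼ), E_I(h) = Pr_{(x,y)∼q}[φ(h(x)) ∉ C], and E_q(h_C) = Pr_{(x,y)∼q}[φ(h(x)) ∈ C and φ(h(x)) ≠ y], the estimation error of the transferable probability satisfies ‖ẇ − w‖₁ ≤ 2δ̄ + 2E_I(h) + 2E_q(h_C). -/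

import Mathlib

/-!
For a point `g` of the simplex, `∑ c, |(e_y)_c - g c| = 2 (1 - g y)`, and
`1 - g y ≤ (1 - max g) + [φ ≠ y]`. Because `y ∈ C` almost surely, the event `φ ≠ y` is the
disjoint union of `φ ∉ C` and `φ ∈ C, φ ≠ y`. Taking expectations, together with
`‖E v‖₁ ≤ E ‖v‖₁`, gives the bound.
-/

open MeasureTheory

section OneHot

variable {ι : Type*} [Fintype ι] {g : ι → ℝ}

theorem le_one_of_nonneg_of_sum_eq_one (hg0 : ∀ j, 0 ≤ g j) (hg1 : ∑ j, g j = 1) (a : ι) :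
    g a ≤ 1 :=
  hg1 ▸ Finset.single_le_sum (fun j _ => hg0 j) (Finset.mem_univ a)

variable [DecidableEq ι]

theorem sum_abs_ite_sub_eq (hg0 : ∀ j, 0 ≤ g j) (hg1 : ∑ j, g j = 1) (y : ι) :
    ∑ c, |(if y = c then (1 : ℝ) else 0) - g c| = 2 * (1 - g y) := by
  have hrest : ∑ c ∈ Finset.univ.erase y, |(if y = c then (1 : ℝ) else 0) - g c| = 1 - g y := by
    rw [← hg1, ← Finset.add_sum_erase _ _ (Finset.mem_univ y), add_sub_cancel_left]
    refine Finset.sum_congr rfl fun c hc => ?_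
    rw [if_neg (Finset.ne_of_mem_erase hc).symm, zero_sub, abs_neg, abs_of_nonneg (hg0 c)]
  rw [← Finset.add_sum_erase _ _ (Finset.mem_univ y), hrest, if_pos rfl,
    abs_of_nonneg (sub_nonneg.2 (le_one_of_nonneg_of_sum_eq_one hg0 hg1 y))]
  ring

theorem sum_abs_ite_sub_le (hg0 : ∀ j, 0 ≤ g j) (hg1 : ∑ j, g j = 1) {a y : ι} {C : Finset ι}
    (hy : y ∈ C) :
    ∑ c, |(if y = c then (1 : ℝ) else 0) - g c|
      ≤ 2 * (1 - g a) + 2 * (if a ∉ C then 1 else 0) + 2 * (if a ∈ C ∧ a ≠ y then 1 else 0) := by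
  rw [sum_abs_ite_sub_eq hg0 hg1]
  by_cases hay : a = y
  · subst hay
    simp [hy]
  · have hsplit : (if a ∉ C then (1 : ℝ) else 0) + (if a ∈ C ∧ a ≠ y then 1 else 0) = 1 := by
      by_cases haC : a ∈ C <;> simp [haC, hay]
    linarith [hg0 y, le_one_of_nonneg_of_sum_eq_one hg0 hg1 a]

end OneHot

theorem sum_abs_integral_le_integral_sum_abs {α ι : Type*} [MeasurableSpace α] [Fintype ι]
    {μ : Measure α} {F : ι → α → ℝ} (hF : ∀ c, Integrable (F c) μ) :
    ∑ c, |∫ p, F c p ∂μ| ≤ ∫ p, ∑ c, |F c p| ∂μ := by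
  rw [integral_finsetSum _ fun c _ => (hF c).abs]
  exact Finset.sum_le_sum fun c _ => abs_integral_le_integral_abs

theorem sum_abs_integral_ite_sub_le {α ι : Type*} [MeasurableSpace α] [Fintype ι] [DecidableEq ι]
    [MeasurableSpace ι] [MeasurableSingletonClass ι] {μ : Measure α} [IsFiniteMeasure μ]
    {Y : α → ι} (hY : Measurable Y) {g : α → ι → ℝ} (hg : ∀ c, Integrable (fun p => g p c) μ) :
    ∑ c, |(∫ p, (if Y p = c then (1 : ℝ) else 0) ∂μ) - ∫ p, g p c ∂μ|
      ≤ ∫ p, ∑ c, |(if Y p = c then (1 : ℝ) else 0) - g p c| ∂μ := by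
  have hlabel (c : ι) : Integrable (fun p => if Y p = c then (1 : ℝ) else 0) μ :=
    .of_bound (Measurable.ite (hY (measurableSet_singleton c)) measurable_const
      measurable_const).aestronglyMeasurable 1 (.of_forall fun p => by split_ifs <;> simp)
  simp_rw [← integral_sub (hlabel _) (hg _)]
  exact sum_abs_integral_le_integral_sum_abs fun c => (hlabel c).sub (hg c)

theorem transferable_probability_error_bound_shared_general (n : ℕ)
    {X : Type*} [MeasurableSpace X]
    (q : Measure (X × Fin n)) [IsProbabilityMeasure q]
    (h : X → Fin n → ℝ) (hmeas : Measurable h)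
    (hsimplex : ∀ x, (∀ j, 0 ≤ h x j ∧ h x j ≤ 1) ∧ ∑ j, h x j = 1)
    (φ : (Fin n → ℝ) → Fin n) (hφmeas : Measurable fun x => φ (h x))
    (hφ : ∀ x, h x (φ (h x)) = ⨆ j, h x j)
    (C : Finset (Fin n)) (hC : ∀ᵐ p ∂q, p.2 ∈ C) :
    ∑ c, |(∫ p, (if p.2 = c then (1 : ℝ) else 0) ∂q) - ∫ p, h p.1 c ∂q|
      ≤ 2 * (∫ p, (1 - ⨆ j, h p.1 j) ∂q)
        + 2 * (q {p | φ (h p.1) ∉ C}).toReal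
        + 2 * (q {p | φ (h p.1) ∈ C ∧ φ (h p.1) ≠ p.2}).toReal := by
  have h_nonneg : ∀ x j, 0 ≤ h x j := fun x j => ((hsimplex x).1 j).1
  have h_le_one : ∀ x j, h x j ≤ 1 := fun x j => ((hsimplex x).1 j).2
  have hcoord_meas (c : Fin n) : Measurable fun p : X × Fin n => h p.1 c :=
    (measurable_pi_apply c).comp (hmeas.comp measurable_fst)
  have hcoord (c : Fin n) : Integrable (fun p : X × Fin n => h p.1 c) q :=
    .of_bound (hcoord_meas c).aestronglyMeasurable 1 (.of_forall fun p => by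
      rw [Real.norm_of_nonneg (h_nonneg _ _)]; exact h_le_one _ _)
  have hgap : Integrable (fun p : X × Fin n => 1 - ⨆ j, h p.1 j) q :=
    .of_bound (measurable_const.sub (Measurable.iSup hcoord_meas)).aestronglyMeasurable 1
      (.of_forall fun p => by
        rw [← hφ, Real.norm_of_nonneg (sub_nonneg.2 (h_le_one _ _))]
        linarith [h_nonneg p.1 (φ (h p.1))])
  have hpred : Measurable fun p : X × Fin n => φ (h p.1) := hφmeas.comp measurable_fst
  set S₁ : Set (X × Fin n) := {p | φ (h p.1) ∉ C} with hS₁_def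
  set S₂ : Set (X × Fin n) := {p | φ (h p.1) ∈ C ∧ φ (h p.1) ≠ p.2} with hS₂_def
  have hS₁ : MeasurableSet S₁ := (hpred C.finite_toSet.measurableSet).compl
  have hS₂ : MeasurableSet S₂ :=
    (hpred C.finite_toSet.measurableSet).inter (measurableSet_eq_fun hpred measurable_snd).compl
  have hE₁ := ((integrable_const (μ := q) (1 : ℝ)).indicator hS₁).const_mul 2
  have hE₂ := ((integrable_const (μ := q) (1 : ℝ)).indicator hS₂).const_mul 2
  calc _ ≤ ∫ p, ∑ c, |(if p.2 = c then (1 : ℝ) else 0) - h p.1 c| ∂q :=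
        sum_abs_integral_ite_sub_le (μ := q) measurable_snd hcoord
    _ ≤ ∫ p, (2 * (1 - ⨆ j, h p.1 j) + 2 * S₁.indicator (fun _ => 1) p
          + 2 * S₂.indicator (fun _ => 1) p) ∂q := by
        refine integral_mono_of_nonneg (.of_forall fun p => by positivity)
          (((hgap.const_mul 2).add hE₁).add hE₂) ?_
        filter_upwards [hC] with p hp
        simpa only [Set.indicator_apply, hS₁_def, hS₂_def, Set.mem_ofPred_eq, ← hφ] using
          sum_abs_ite_sub_le (h_nonneg p.1) (hsimplex p.1).2 (a := φ (h p.1)) hp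
    _ = _ := by
        rw [integral_add ?_ hE₂, integral_add (hgap.const_mul 2) hE₁,
          integral_const_mul, integral_const_mul, integral_const_mul,
          integral_indicator_const _ hS₁, integral_indicator_const _ hS₂, smul_eq_mul, smul_eq_mul,
          mul_one, mul_one]
        · rfl
        · exact (hgap.const_mul 2).add hE₁

/-- With labels almost surely in the shared class space `C`, the estimation error of
the transferable probability satisfies
`‖ẇ − w‖₁ ≤ 2 δ̄ + 2 E_I(h) + 2 E_q(h_C)`, where `ẇ = E_q e_y`, `w = E_q h(x)`,
`δ̄ = E_q (1 − maxⱼ (h x) j)`, `E_I(h) = Pr_q[φ (h x) ∉ C]` is the Type I error and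
`E_q(h_C) = Pr_q[φ (h x) ∈ C ∧ φ (h x) ≠ y]`. -/
theorem transferable_probability_error_bound_shared (n : ℕ) [NeZero n]
    {X : Type*} [MeasurableSpace X]
    (q : Measure (X × Fin n)) [IsProbabilityMeasure q]
    (h : X → Fin n → ℝ) (hmeas : Measurable h)
    (hsimplex : ∀ x, (∀ j, 0 ≤ h x j ∧ h x j ≤ 1) ∧ ∑ j, h x j = 1)
    (φ : (Fin n → ℝ) → Fin n) (hφmeas : Measurable fun x => φ (h x))
    (hφ : ∀ x, h x (φ (h x)) = ⨆ j, h x j)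
    (C : Finset (Fin n)) (hC : ∀ᵐ p ∂q, p.2 ∈ C) :
    ∑ c, |(∫ p, (if p.2 = c then (1 : ℝ) else 0) ∂q) - ∫ p, h p.1 c ∂q|
      ≤ 2 * (∫ p, (1 - ⨆ j, h p.1 j) ∂q)
        + 2 * (q {p | φ (h p.1) ∉ C}).toReal
        + 2 * (q {p | φ (h p.1) ∈ C ∧ φ (h p.1) ≠ p.2}).toReal :=
  transferable_probability_error_bound_shared_general n q h hmeas hsimplex φ hφmeas hφ C hC
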